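/- Fix γ > 0 and set C = (π/(2γ))^{1/3}. For every fixed r ≠ 0, |x_{B,−}(r)| diverges to +∞ as B → +∞, and more precisely lim_{B→+∞} B^{−1/3}·x_{B,−}(r) = sign(r)·C·|r|^{−1/3} and lim_{B→+∞} B^{−1/3}·(d/dr)x_{B,−}(r) = −(C/3)·|r|^{−4/3}. -/

import Mathlib

/-!
Write `F_B(t) = (2√(t² + B²/4) - B) t`, so that `x_{B,-}(r)` solves `F_B(t) = c` with
`c = π/(γ r)`. Since `F_B` is odd it suffices to take `r > 0`, where `t = x_{B,-}(r)` is
positive. Squaring `2t√(t² + B²/4) = c + Bt` gives the quartic `4t⁴ = c² + 2Bct`, i.e.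
`t³/B = c/2 + c²/(4Bt)`; hence `t³ ≥ Bc/2 → ∞` and `t³/B → c/2`, which is the cube-root
asymptotics of `x_{B,-}`. The function `F_B` is a strictly increasing bijection of `ℝ`, so
`x_{B,-}(·) = F_B⁻¹(π/(γ ·))` is differentiable with `x' = -(c/r)/F_B'(t)`, and on the
quartic `1/F_B'(t) = t(Bt + c)/(3Bct + 2c²) ~ B^{1/3} (c/2)^{1/3}/(3c)`.
-/

open Filter Topology

theorem HasDerivAt.of_strictMono_comp_eq {F y g : ℝ → ℝ} {F' g' r : ℝ} (hF : StrictMono F)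
    (hF_surj : Function.Surjective F) (hF' : HasDerivAt F F' (y r)) (hF'0 : F' ≠ 0)
    (hg : HasDerivAt g g' r) (hy : ∀ᶠ s in 𝓝 r, F (y s) = g s) :
    HasDerivAt y (g' / F') r := by
  set e := hF.orderIsoOfSurjective F hF_surj
  have he_apply (z : ℝ) : F (e.symm z) = z := e.apply_symm_apply z
  have hye : y =ᶠ[𝓝 r] e.symm ∘ g :=
    hy.mono fun s hs => hF.injective (by rw [Function.comp_apply, he_apply, hs])
  have he : HasDerivAt e.symm F'⁻¹ (g r) := by
    refine .of_local_left_inverse e.symm.continuous.continuousAt ?_ hF'0 (.of_forall he_apply)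
    rwa [← Function.comp_apply (f := e.symm), ← hye.eq_of_nhds]
  simpa only [div_eq_inv_mul] using (he.comp r hg).congr_of_eventuallyEq hye

lemma Real.pow_three_rpow_one_third {a : ℝ} (ha : 0 ≤ a) : (a ^ 3) ^ (1 / 3 : ℝ) = a := by
  simpa using Real.pow_rpow_inv_natCast ha three_ne_zero

lemma cube_div_eq_of_quartic {B c t : ℝ} (hB : B ≠ 0) (ht : t ≠ 0)
    (h : 4 * t ^ 4 = c ^ 2 + 2 * B * c * t) : t ^ 3 / B = c / 2 + c ^ 2 / 4 * (B * t)⁻¹ := by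
  field_simp
  linear_combination 2 * h

section QuarticRoot

variable {c : ℝ} {t : ℝ → ℝ}

lemma tendsto_atTop_of_quartic (hc : 0 < c)
    (ht : ∀ B > 0, 0 < t B ∧ 4 * t B ^ 4 = c ^ 2 + 2 * B * c * t B) :
    Tendsto t atTop atTop := by
  have hlower : ∀ᶠ B in atTop, (B * (c / 2)) ^ (1 / 3 : ℝ) ≤ t B := by
    filter_upwards [eventually_gt_atTop 0] with B hB
    obtain ⟨htB, hq⟩ := ht B hB
    have hcube : B * (c / 2) ≤ t B ^ 3 := by nlinarith [sq_nonneg c]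
    calc (B * (c / 2)) ^ (1 / 3 : ℝ) ≤ (t B ^ 3) ^ (1 / 3 : ℝ) :=
          Real.rpow_le_rpow (by positivity) hcube (by norm_num)
      _ = t B := Real.pow_three_rpow_one_third htB.le
  refine tendsto_atTop_mono' atTop hlower ?_
  exact (tendsto_rpow_atTop (by norm_num)).comp (tendsto_id.atTop_mul_const (by positivity))

lemma tendsto_inv_mul_of_quartic (hc : 0 < c)
    (ht : ∀ B > 0, 0 < t B ∧ 4 * t B ^ 4 = c ^ 2 + 2 * B * c * t B) :
    Tendsto (fun B => (B * t B)⁻¹) atTop (𝓝 0) :=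
  (tendsto_id.atTop_mul_atTop₀ (tendsto_atTop_of_quartic hc ht)).inv_tendsto_atTop

lemma tendsto_cube_div_of_quartic (hc : 0 < c)
    (ht : ∀ B > 0, 0 < t B ∧ 4 * t B ^ 4 = c ^ 2 + 2 * B * c * t B) :
    Tendsto (fun B => t B ^ 3 / B) atTop (𝓝 (c / 2)) := by
  have h := (tendsto_inv_mul_of_quartic hc ht).const_mul (c ^ 2 / 4) |>.const_add (c / 2)
  rw [mul_zero, add_zero] at h
  refine h.congr' ?_
  filter_upwards [eventually_gt_atTop 0] with B hB
  obtain ⟨htB, hq⟩ := ht B hB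
  exact (cube_div_eq_of_quartic hB.ne' htB.ne' hq).symm

lemma tendsto_rpow_neg_mul_of_quartic (hc : 0 < c)
    (ht : ∀ B > 0, 0 < t B ∧ 4 * t B ^ 4 = c ^ 2 + 2 * B * c * t B) :
    Tendsto (fun B => B ^ (-(1 / 3 : ℝ)) * t B) atTop (𝓝 ((c / 2) ^ (1 / 3 : ℝ))) := by
  have hcont : ContinuousAt (· ^ (1 / 3 : ℝ)) (c / 2) :=
    Real.continuousAt_rpow_const _ _ (Or.inl (by positivity))
  refine (hcont.tendsto.comp (tendsto_cube_div_of_quartic hc ht)).congr' ?_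
  filter_upwards [eventually_gt_atTop 0] with B hB
  obtain ⟨htB, -⟩ := ht B hB
  rw [Function.comp_apply, Real.div_rpow (by positivity) hB.le,
    Real.pow_three_rpow_one_third htB.le, Real.rpow_neg hB.le, div_eq_inv_mul]

lemma tendsto_rpow_neg_mul_ratio_of_quartic (hc : 0 < c)
    (ht : ∀ B > 0, 0 < t B ∧ 4 * t B ^ 4 = c ^ 2 + 2 * B * c * t B) :
    Tendsto (fun B => B ^ (-(1 / 3 : ℝ)) * (t B * (B * t B + c) / (3 * B * c * t B + 2 * c ^ 2)))
      atTop (𝓝 ((c / 2) ^ (1 / 3 : ℝ) / (3 * c))) := by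
  have hu := tendsto_inv_mul_of_quartic hc ht
  have h := (tendsto_rpow_neg_mul_of_quartic hc ht).mul
    (((tendsto_const_nhds (x := (1 : ℝ))).add (hu.const_mul c)).div
      (tendsto_const_nhds.add (hu.const_mul (2 * c ^ 2))) (by positivity : 3 * c + 2 * c ^ 2 * 0 ≠ 0))
  rw [mul_zero, mul_zero, add_zero, add_zero, mul_one_div] at h
  refine h.congr' ?_
  filter_upwards [eventually_gt_atTop 0] with B hB
  have htB := (ht B hB).1
  rw [Pi.div_apply]
  field_simp

end QuarticRoot

noncomputable section

namespace XMinus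

open Real

/-- `x_{B,-}(r)` is the solution `t` of `lhs B t = π / (γ * r)`. -/
def lhs (B t : ℝ) : ℝ := (2 * √(t ^ 2 + B ^ 2 / 4) - B) * t

def lhsDeriv (B t : ℝ) : ℝ := 2 * t ^ 2 / √(t ^ 2 + B ^ 2 / 4) + (2 * √(t ^ 2 + B ^ 2 / 4) - B)

lemma le_two_mul_sqrt (B t : ℝ) : B ≤ 2 * √(t ^ 2 + B ^ 2 / 4) := by
  have := Real.abs_le_sqrt (x := B / 2) (y := t ^ 2 + B ^ 2 / 4) (by nlinarith [sq_nonneg t])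
  linarith [le_abs_self (B / 2)]

lemma pos_of_lhs_pos {B t : ℝ} (h : 0 < lhs B t) : 0 < t := by
  by_contra! ht
  exact h.not_ge (mul_nonpos_of_nonneg_of_nonpos (by linarith [le_two_mul_sqrt B t]) ht)

lemma quartic_of_lhs_eq {B t c : ℝ} (h : lhs B t = c) : 4 * t ^ 4 = c ^ 2 + 2 * B * c * t := by
  have hS : √(t ^ 2 + B ^ 2 / 4) ^ 2 = t ^ 2 + B ^ 2 / 4 := Real.sq_sqrt (by positivity)
  have h2 : 2 * t * √(t ^ 2 + B ^ 2 / 4) = c + B * t := by rw [← h, lhs]; ring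
  linear_combination (c + B * t + 2 * t * √(t ^ 2 + B ^ 2 / 4)) * h2 - 4 * t ^ 2 * hS

lemma hasDerivAt_lhs {B : ℝ} (hB : B ≠ 0) (t : ℝ) : HasDerivAt (lhs B) (lhsDeriv B t) t := by
  have hsq : HasDerivAt (fun t => √(t ^ 2 + B ^ 2 / 4)) (t / √(t ^ 2 + B ^ 2 / 4)) t := by
    convert ((hasDerivAt_pow 2 t).add_const (B ^ 2 / 4)).sqrt (by positivity) using 1
    field_simp
    ring
  refine (((hsq.const_mul 2).sub_const B).mul (hasDerivAt_id' t)).congr_deriv ?_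
  rw [lhsDeriv]
  field_simp

lemma lhsDeriv_pos {B t : ℝ} (ht : t ≠ 0) : 0 < lhsDeriv B t := by
  have : 0 < 2 * t ^ 2 / √(t ^ 2 + B ^ 2 / 4) := by positivity
  rw [lhsDeriv]
  linarith [le_two_mul_sqrt B t]

lemma strictMono_lhs {B : ℝ} (hB : B ≠ 0) : StrictMono (lhs B) := by
  have hcont : Continuous (lhs B) := continuous_iff_continuousAt.2 fun t =>
    (hasDerivAt_lhs hB t).continuousAt
  have hderiv {t : ℝ} (ht : t ≠ 0) : 0 < deriv (lhs B) t := by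
    rw [(hasDerivAt_lhs hB t).deriv]; exact lhsDeriv_pos ht
  refine StrictMonoOn.Iic_union_Ici (a := 0) ?_ ?_
  · refine strictMonoOn_of_deriv_pos (convex_Iic 0) hcont.continuousOn fun t ht => hderiv ?_
    rw [interior_Iic] at ht; exact ht.ne
  · refine strictMonoOn_of_deriv_pos (convex_Ici 0) hcont.continuousOn fun t ht => hderiv ?_
    rw [interior_Ici] at ht; exact ht.ne'

/-- At a solution of `lhs B t = c`, the square root is `(c + B t) / (2 t)`, which makes the
derivative rational in `t`. -/
lemma lhsDeriv_eq_of_lhs_eq {B t c : ℝ} (ht : t ≠ 0) (h : lhs B t = c) :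
    lhsDeriv B t = (3 * B * c * t + 2 * c ^ 2) / (t * (B * t + c)) := by
  have hS : 0 < √(t ^ 2 + B ^ 2 / 4) := Real.sqrt_pos.2 (by positivity)
  have h2 : √(t ^ 2 + B ^ 2 / 4) = (B * t + c) / (2 * t) := by
    rw [eq_div_iff (by positivity), ← h, lhs]; ring
  have hBc : t * B + c ≠ 0 := by
    intro h0; rw [mul_comm, h0, zero_div] at h2; exact hS.ne' h2
  have hq := quartic_of_lhs_eq h
  rw [lhsDeriv, h2]
  field_simp
  linear_combination hq

lemma lhs_zero (B : ℝ) : lhs B 0 = 0 := by simp [lhs]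

lemma lhs_neg (B t : ℝ) : lhs B (-t) = -lhs B t := by simp [lhs]

variable {γ : ℝ} {x : ℝ → ℝ → ℝ}

/-- The defining equation already shows that every nonzero value is attained. -/
lemma surjective_lhs (hγ : γ ≠ 0) (hx : ∀ B > 0, ∀ r ≠ 0, lhs B (x B r) = π / (γ * r))
    {B : ℝ} (hB : 0 < B) : Function.Surjective (lhs B) := by
  intro z
  rcases eq_or_ne z 0 with rfl | hz
  · exact ⟨0, lhs_zero B⟩
  · refine ⟨x B (π / (γ * z)), ?_⟩
    rw [hx B hB _ (by positivity)]
    field_simp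

lemma hasDerivAt_solution (hγ : γ ≠ 0) (hx : ∀ B > 0, ∀ r ≠ 0, lhs B (x B r) = π / (γ * r))
    {B r : ℝ} (hB : 0 < B) (hr : r ≠ 0) :
    HasDerivAt (x B) (-(π / (γ * r)) / r / lhsDeriv B (x B r)) r := by
  have hxr : x B r ≠ 0 := by
    intro h0
    have := hx B hB r hr
    rw [h0, lhs_zero] at this
    exact (by positivity : π / (γ * r) ≠ 0) this.symm
  have hg : HasDerivAt (fun s => π / (γ * s)) (-(π / (γ * r)) / r) r := by
    have := ((hasDerivAt_id r).const_mul γ).inv (mul_ne_zero hγ hr) |>.const_mul π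
    refine this.congr_deriv ?_
    simp only [id]
    field_simp
  exact .of_strictMono_comp_eq (strictMono_lhs hB.ne') (surjective_lhs hγ hx hB)
    (hasDerivAt_lhs hB.ne' _) (lhsDeriv_pos hxr).ne' hg
    (eventually_ne_nhds hr |>.mono fun s hs => hx B hB s hs)

theorem tendsto_solution_of_pos (hγ : 0 < γ)
    (hx : ∀ B > 0, ∀ r ≠ 0, lhs B (x B r) = π / (γ * r)) {r : ℝ} (hr : 0 < r) :
    Tendsto (x · r) atTop atTop ∧
      Tendsto (fun B => B ^ (-(1 / 3 : ℝ)) * x B r) atTop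
        (𝓝 ((π / (2 * γ)) ^ (1 / 3 : ℝ) * r ^ (-(1 / 3 : ℝ)))) ∧
      Tendsto (fun B => B ^ (-(1 / 3 : ℝ)) * deriv (x B) r) atTop
        (𝓝 (-((π / (2 * γ)) ^ (1 / 3 : ℝ) / 3) * r ^ (-(4 / 3 : ℝ)))) := by
  set c := π / (γ * r) with hc_def
  have hc : 0 < c := by positivity
  have hroot : ∀ B > 0, 0 < x B r ∧ 4 * x B r ^ 4 = c ^ 2 + 2 * B * c * x B r := fun B hB =>
    ⟨pos_of_lhs_pos (by rwa [hx B hB r hr.ne']), quartic_of_lhs_eq (hx B hB r hr.ne')⟩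
  have hL : (c / 2) ^ (1 / 3 : ℝ) = (π / (2 * γ)) ^ (1 / 3 : ℝ) * r ^ (-(1 / 3 : ℝ)) := by
    rw [Real.rpow_neg hr.le, ← Real.inv_rpow hr.le, ← Real.mul_rpow (by positivity) (by positivity)]
    congr 1
    rw [hc_def]
    field_simp
  refine ⟨tendsto_atTop_of_quartic hc hroot, hL ▸ tendsto_rpow_neg_mul_of_quartic hc hroot, ?_⟩
  have hderiv : ∀ B > 0, B ^ (-(1 / 3 : ℝ)) * deriv (x B) r =
      -(c / r) * (B ^ (-(1 / 3 : ℝ)) *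
        (x B r * (B * x B r + c) / (3 * B * c * x B r + 2 * c ^ 2))) := by
    intro B hB
    rw [(hasDerivAt_solution hγ.ne' hx hB hr.ne').deriv,
      lhsDeriv_eq_of_lhs_eq (hroot B hB).1.ne' (hx B hB r hr.ne'), hc_def]
    field_simp
  have hlim : -(c / r) * ((c / 2) ^ (1 / 3 : ℝ) / (3 * c)) =
      -((π / (2 * γ)) ^ (1 / 3 : ℝ) / 3) * r ^ (-(4 / 3 : ℝ)) := by
    rw [hL, show -(4 / 3 : ℝ) = -(1 / 3) - 1 by norm_num, Real.rpow_sub_one hr.ne']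
    field_simp
  rw [← hlim]
  exact ((tendsto_rpow_neg_mul_ratio_of_quartic hc hroot).const_mul _).congr'
    (eventually_gt_atTop 0 |>.mono fun B hB => (hderiv B hB).symm)

end XMinus

end

theorem stmt_4 (γ : ℝ) (hγ : 0 < γ)
    (x : ℝ → ℝ → ℝ)
    (hx : ∀ B : ℝ, 0 < B → ∀ r : ℝ, r ≠ 0 →
      (2 * Real.sqrt (x B r ^ 2 + B ^ 2 / 4) - B) * x B r = Real.pi / (γ * r)) :
    ∀ r : ℝ, r ≠ 0 →
      Tendsto (fun B => |x B r|) atTop atTop ∧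
      Tendsto (fun B => B ^ (-(1 / 3 : ℝ)) * x B r) atTop
        (𝓝 (Real.sign r * (Real.pi / (2 * γ)) ^ ((1 : ℝ) / 3) * |r| ^ (-(1 / 3 : ℝ)))) ∧
      Tendsto (fun B => B ^ (-(1 / 3 : ℝ)) * deriv (x B) r) atTop
        (𝓝 (-((Real.pi / (2 * γ)) ^ ((1 : ℝ) / 3) / 3) * |r| ^ (-(4 / 3 : ℝ)))) := by
  replace hx : ∀ B > 0, ∀ r ≠ 0, XMinus.lhs B (x B r) = Real.pi / (γ * r) := hx
  intro r hr
  rcases hr.lt_or_gt with hr | hr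
  · have hx' : ∀ B > 0, ∀ s ≠ 0, XMinus.lhs B (-x B (-s)) = Real.pi / (γ * s) := fun B hB s hs => by
      rw [XMinus.lhs_neg, hx B hB _ (neg_ne_zero.2 hs), mul_neg, div_neg, neg_neg]
    obtain ⟨h₁, h₂, h₃⟩ := XMinus.tendsto_solution_of_pos hγ hx' (neg_pos.2 hr)
    simp only [neg_neg, deriv.fun_neg, deriv_comp_neg] at h₁ h₂ h₃
    rw [Real.sign_of_neg hr, abs_of_neg hr]
    refine ⟨tendsto_abs_atTop_atTop.comp h₁ |>.congr fun B => abs_neg _, ?_, h₃⟩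
    simpa using h₂.neg
  · obtain ⟨h₁, h₂, h₃⟩ := XMinus.tendsto_solution_of_pos hγ hx hr
    rw [Real.sign_of_pos hr, abs_of_pos hr, one_mul]
    exact ⟨tendsto_abs_atTop_atTop.comp h₁, h₂, h₃⟩
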